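/- Let (x̄,σ̄) ∈ ℝⁿ × dom V* satisfy A(σ̄)x̄ = b(σ̄), q(x̄) ∈ ∂V*(σ̄), and assume A(σ̄) is positive semidefinite. Then σ̄ ∈ S_col⁺ and f(x̄) = inf_{x ∈ dom f} f(x) = Ξ(x̄,σ̄) = sup_{σ ∈ S_col⁺} D(σ) = D(σ̄). Furthermore, if σ̄ ∈ S⁺ (A(σ̄) positive definite), then x̄ is the unique global minimizer of f on dom f. -/

import Mathlib

open Matrix Set

noncomputable section

/-- The quadratic function `x ↦ ½⟨x, A x⟩ − ⟨b, x⟩ + c`. -/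
def qf {n : ℕ} (A : Matrix (Fin n) (Fin n) ℝ) (b : Fin n → ℝ) (c : ℝ) (x : Fin n → ℝ) : ℝ :=
  (1 / 2 : ℝ) * (x ⬝ᵥ A.mulVec x) - b ⬝ᵥ x + c

/-- `A(σ) = A₀ + Σ σ_k A_k`. -/
def Amat {n m : ℕ} (A0 : Matrix (Fin n) (Fin n) ℝ) (A : Fin m → Matrix (Fin n) (Fin n) ℝ)
    (σ : Fin m → ℝ) : Matrix (Fin n) (Fin n) ℝ :=
  A0 + ∑ k, σ k • A k

/-- `b(σ) = b₀ + Σ σ_k b_k`. -/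
def bvec {n m : ℕ} (b0 : Fin n → ℝ) (b : Fin m → Fin n → ℝ) (σ : Fin m → ℝ) : Fin n → ℝ :=
  b0 + ∑ k, σ k • b k

/-- `q(x) = (q₁(x), …, q_m(x))`. -/
def qvec {n m : ℕ} (A : Fin m → Matrix (Fin n) (Fin n) ℝ) (b : Fin m → Fin n → ℝ)
    (c : Fin m → ℝ) (x : Fin n → ℝ) : Fin m → ℝ :=
  fun i => qf (A i) (b i) (c i) x

/-- Subdifferential of an (extended-real-valued) convex function represented by its
finite part `V` and its effective domain `dV`; it is empty outside `dV`. -/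
def subdiff {m : ℕ} (V : (Fin m → ℝ) → ℝ) (dV : Set (Fin m → ℝ)) (y : Fin m → ℝ) :
    Set (Fin m → ℝ) :=
  {σ | y ∈ dV ∧ ∀ y' ∈ dV, (y' - y) ⬝ᵥ σ ≤ V y' - V y}

/-- `V ∈ Γ(ℝᵐ)`: proper, convex and lower semicontinuous (closed epigraph), where the
extended-real-valued function is represented by its finite part `V` on its domain `dV`. -/
def properLscConvex {m : ℕ} (V : (Fin m → ℝ) → ℝ) (dV : Set (Fin m → ℝ)) : Prop :=
  dV.Nonempty ∧ ConvexOn ℝ dV V ∧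
    IsClosed {p : (Fin m → ℝ) × ℝ | p.1 ∈ dV ∧ V p.1 ≤ p.2}

/-- `(Vs, dVs)` is the Fenchel conjugate of `(V, dV)`:
`dVs` is the set where the supremum is finite and `Vs` its value there. -/
def isConjugate {m : ℕ} (V : (Fin m → ℝ) → ℝ) (dV : Set (Fin m → ℝ))
    (Vs : (Fin m → ℝ) → ℝ) (dVs : Set (Fin m → ℝ)) : Prop :=
  dVs = {σ | BddAbove ((fun y => y ⬝ᵥ σ - V y) '' dV)} ∧
    ∀ σ ∈ dVs, Vs σ = sSup ((fun y => y ⬝ᵥ σ - V y) '' dV)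

/-- The continuous linear functional `v ↦ ⟨g, v⟩`. -/
def dotCLM {k : ℕ} (g : Fin k → ℝ) : (Fin k → ℝ) →L[ℝ] ℝ :=
  LinearMap.toContinuousLinearMap
    { toFun := fun v => g ⬝ᵥ v
      map_add' := fun u v => by simp [dotProduct_add]
      map_smul' := fun t v => by simp [dotProduct_smul, smul_eq_mul] }

/-- The continuous linear map `v ↦ M v`. -/
def matCLM {k l : ℕ} (M : Matrix (Fin l) (Fin k) ℝ) : (Fin k → ℝ) →L[ℝ] (Fin l → ℝ) :=
  LinearMap.toContinuousLinearMap M.mulVecLin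

/-!
For σ ∈ dom V* with A(σ) ⪰ 0 and A(σ)x₀ = b(σ), the map x ↦ q₀(x) + ⟨q(x), σ⟩ is a convex
quadratic minimized at x₀, and the Fenchel–Young inequality ⟨y, σ⟩ − V(y) ≤ V*(σ) bounds
Ξ(x, σ) by f(x); this gives all the inequalities. Equality at (x̄, σ̄) holds because
q(x̄) ∈ ∂V*(σ̄) means V**(q(x̄)) = ⟨q(x̄), σ̄⟩ − V*(σ̄), and V** = V: a point (y, t) below the
closed convex epigraph of V is strictly separated from it by a hyperplane. A non-vertical one is
the graph of an affine minorant of V exceeding t at y; a vertical one, added in a large multiple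
to the affine minorant given by σ̄, yields such a minorant too.
-/

theorem StrongDual.exists_dotProduct_add_mul {ι : Type*} [Fintype ι] [DecidableEq ι]
    (f : StrongDual ℝ ((ι → ℝ) × ℝ)) : ∃ (g : ι → ℝ) (s : ℝ), ∀ y r, f (y, r) = y ⬝ᵥ g + r * s := by
  refine ⟨fun i => f (fun j => if i = j then 1 else 0, 0), f (0, 1), fun y r => ?_⟩
  have hy := LinearMap.pi_apply_eq_sum_univ ((f : _ →ₗ[ℝ] ℝ).comp (LinearMap.inl ℝ _ ℝ)) y
  have hr : f (0, r) = r * f (0, 1) := by simpa using map_smul f r ((0 : ι → ℝ), (1 : ℝ))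
  have hsplit : f (y, r) = f (y, 0) + f (0, r) := by
    rw [← map_add, Prod.mk_add_mk, add_zero, zero_add]
  rw [hsplit, ← hr]
  exact congrArg (· + _) hy

theorem isSymm_Amat {n m : ℕ} {A0 : Matrix (Fin n) (Fin n) ℝ}
    {A : Fin m → Matrix (Fin n) (Fin n) ℝ} (hA0 : A0.IsSymm) (hA : ∀ i, (A i).IsSymm)
    (σ : Fin m → ℝ) : (Amat A0 A σ).IsSymm :=
  hA0.add (by
    rw [Matrix.IsSymm, transpose_sum]
    exact Finset.sum_congr rfl fun k _ => (hA k).smul (σ k))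

theorem qf_sub_qf_of_mulVec_eq {n : ℕ} {M : Matrix (Fin n) (Fin n) ℝ} (hM : M.IsSymm)
    {v x₀ : Fin n → ℝ} (h : M *ᵥ x₀ = v) (c : ℝ) (x : Fin n → ℝ) :
    qf M v c x - qf M v c x₀ = (1 / 2 : ℝ) * ((x - x₀) ⬝ᵥ M *ᵥ (x - x₀)) := by
  subst h
  have hsymm : x₀ ⬝ᵥ M *ᵥ x = x ⬝ᵥ M *ᵥ x₀ := by
    rw [dotProduct_mulVec, ← mulVec_transpose, hM.eq, dotProduct_comm]
  simp only [qf, mulVec_sub, sub_dotProduct, dotProduct_sub, dotProduct_comm (M *ᵥ x₀), hsymm]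
  ring

theorem qf_add_qvec_dotProduct {n m : ℕ} (A0 : Matrix (Fin n) (Fin n) ℝ)
    (A : Fin m → Matrix (Fin n) (Fin n) ℝ) (b0 : Fin n → ℝ) (b : Fin m → Fin n → ℝ)
    (c σ : Fin m → ℝ) (x : Fin n → ℝ) :
    qf A0 b0 0 x + qvec A b c x ⬝ᵥ σ = qf (Amat A0 A σ) (bvec b0 b σ) (c ⬝ᵥ σ) x := by
  have hq : qvec A b c x ⬝ᵥ σ = ∑ k, σ k * qf (A k) (b k) (c k) x := by
    simp only [dotProduct, qvec, mul_comm]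
  have hc : c ⬝ᵥ σ = ∑ k, σ k * c k := by simp only [dotProduct, mul_comm]
  rw [hq]
  simp only [qf, Amat, bvec, add_mulVec, sum_mulVec, dotProduct_add, add_dotProduct,
    dotProduct_sum, sum_dotProduct, smul_mulVec, dotProduct_smul, smul_dotProduct, smul_eq_mul,
    mul_add, mul_sub, Finset.sum_add_distrib, Finset.sum_sub_distrib, mul_left_comm _ (1 / 2 : ℝ),
    ← Finset.mul_sum, hc]
  ring

theorem qf_add_qvec_dotProduct_sub_of_mulVec_eq {n m : ℕ} {A0 : Matrix (Fin n) (Fin n) ℝ}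
    {A : Fin m → Matrix (Fin n) (Fin n) ℝ} (hA0 : A0.IsSymm) (hA : ∀ i, (A i).IsSymm)
    (b0 : Fin n → ℝ) (b : Fin m → Fin n → ℝ) (c : Fin m → ℝ) {σ : Fin m → ℝ}
    {x₀ : Fin n → ℝ} (h : Amat A0 A σ *ᵥ x₀ = bvec b0 b σ) (x : Fin n → ℝ) :
    (qf A0 b0 0 x + qvec A b c x ⬝ᵥ σ) - (qf A0 b0 0 x₀ + qvec A b c x₀ ⬝ᵥ σ) =
      (1 / 2 : ℝ) * ((x - x₀) ⬝ᵥ Amat A0 A σ *ᵥ (x - x₀)) := by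
  rw [qf_add_qvec_dotProduct, qf_add_qvec_dotProduct]
  exact qf_sub_qf_of_mulVec_eq (isSymm_Amat hA0 hA σ) h _ x

section Conjugate

variable {m : ℕ} {V Vs : (Fin m → ℝ) → ℝ} {dV dVs : Set (Fin m → ℝ)}

theorem isConjugate.dotProduct_sub_le (hconj : isConjugate V dV Vs dVs) {σ y : Fin m → ℝ}
    (hσ : σ ∈ dVs) (hy : y ∈ dV) : y ⬝ᵥ σ - V y ≤ Vs σ := by
  rw [hconj.2 σ hσ]
  rw [hconj.1] at hσ
  exact le_csSup hσ ⟨y, hy, rfl⟩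

theorem isConjugate.mem_and_le_of_forall_le (hconj : isConjugate V dV Vs dVs)
    (hne : dV.Nonempty) {σ : Fin m → ℝ} {B : ℝ} (hB : ∀ y ∈ dV, y ⬝ᵥ σ - V y ≤ B) :
    σ ∈ dVs ∧ Vs σ ≤ B := by
  have hbdd : BddAbove ((fun y => y ⬝ᵥ σ - V y) '' dV) := ⟨B, forall_mem_image.2 hB⟩
  have hσ : σ ∈ dVs := by rw [hconj.1]; exact hbdd
  exact ⟨hσ, hconj.2 σ hσ ▸ csSup_le (hne.image _) (forall_mem_image.2 hB)⟩

theorem isConjugate.le_dotProduct_of_forall_lt (hconj : isConjugate V dV Vs dVs)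
    (hne : dV.Nonempty) {σ₀ y g : Fin m → ℝ} {t u : ℝ} (hσ₀ : σ₀ ∈ dVs)
    (h : ∀ σ ∈ dVs, y ⬝ᵥ σ - Vs σ ≤ t) (hsep : ∀ y' ∈ dV, u < y' ⬝ᵥ g) : u ≤ y ⬝ᵥ g := by
  by_contra! hlt
  -- moving from σ₀ to σ₀ - k • g raises the lower bound on `t` by `k * (u - y ⬝ᵥ g)`
  set k := (t - (y ⬝ᵥ σ₀ - Vs σ₀) + 1) / (u - y ⬝ᵥ g)
  have hk : k * (u - y ⬝ᵥ g) = t - (y ⬝ᵥ σ₀ - Vs σ₀) + 1 := div_mul_cancel₀ _ (by linarith)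
  have hk0 : 0 ≤ k := div_nonneg (by linarith [h σ₀ hσ₀]) (by linarith)
  have hdot (z : Fin m → ℝ) : z ⬝ᵥ (σ₀ - k • g) = z ⬝ᵥ σ₀ - k * z ⬝ᵥ g := by
    rw [dotProduct_sub, dotProduct_smul, smul_eq_mul]
  obtain ⟨hσ, hVs⟩ := hconj.mem_and_le_of_forall_le hne (σ := σ₀ - k • g) (B := Vs σ₀ - k * u)
    fun y' hy' => by
      rw [hdot]
      nlinarith [hconj.dotProduct_sub_le hσ₀ hy', hsep y' hy']
  have := h _ hσ
  rw [hdot] at this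
  nlinarith

theorem isConjugate.le_dotProduct_add_mul_of_forall_lt (hconj : isConjugate V dV Vs dVs)
    (hne : dV.Nonempty) {y g : Fin m → ℝ} {s t u : ℝ} (hs : 0 < s)
    (h : ∀ σ ∈ dVs, y ⬝ᵥ σ - Vs σ ≤ t) (hsep : ∀ y' ∈ dV, u < y' ⬝ᵥ g + s * V y') :
    u ≤ y ⬝ᵥ g + s * t := by
  have hdot (z : Fin m → ℝ) : z ⬝ᵥ (-s⁻¹ • g) = -s⁻¹ * z ⬝ᵥ g := by
    rw [dotProduct_smul, smul_eq_mul]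
  obtain ⟨hσ, hVs⟩ := hconj.mem_and_le_of_forall_le hne (σ := -s⁻¹ • g) (B := -s⁻¹ * u)
    fun y' hy' => by
      rw [hdot]
      have := (inv_mul_le_iff₀ hs).2 (by linarith [hsep y' hy'] : u - y' ⬝ᵥ g ≤ s * V y')
      linarith
  have := h _ hσ
  rw [hdot] at this
  have := (inv_mul_le_iff₀ hs).1 (by linarith : s⁻¹ * (u - y ⬝ᵥ g) ≤ t)
  linarith

theorem isConjugate.mem_and_le_of_forall_dotProduct_sub_le (hconj : isConjugate V dV Vs dVs)
    (hV : properLscConvex V dV) {σ₀ y : Fin m → ℝ} {t : ℝ} (hσ₀ : σ₀ ∈ dVs)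
    (h : ∀ σ ∈ dVs, y ⬝ᵥ σ - Vs σ ≤ t) : y ∈ dV ∧ V y ≤ t := by
  by_contra hyt
  obtain ⟨f, u, hfyt, hfepi⟩ :=
    geometric_hahn_banach_point_closed hV.2.1.convex_epigraph hV.2.2 (x := (y, t)) hyt
  obtain ⟨g, s, hf⟩ := f.exists_dotProduct_add_mul
  have hsep : ∀ y' ∈ dV, ∀ r, V y' ≤ r → u < y' ⬝ᵥ g + r * s := fun y' hy' r hr =>
    hf y' r ▸ hfepi (y', r) ⟨hy', hr⟩
  rw [hf] at hfyt
  have hs : 0 ≤ s := by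
    by_contra! hs
    obtain ⟨y₀, hy₀⟩ := hV.1
    set r := max (V y₀) ((u - y₀ ⬝ᵥ g) / s)
    have hr : r * s ≤ u - y₀ ⬝ᵥ g := (div_le_iff_of_neg hs).1 (le_max_right _ _)
    linarith [hsep y₀ hy₀ r (le_max_left _ _)]
  rcases hs.eq_or_lt with rfl | hs
  · have := hconj.le_dotProduct_of_forall_lt hV.1 hσ₀ h fun y' hy' => by
      simpa using hsep y' hy' _ le_rfl
    linarith
  · have := hconj.le_dotProduct_add_mul_of_forall_lt hV.1 hs h fun y' hy' => by
      simpa [mul_comm] using hsep y' hy' _ le_rfl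
    linarith

end Conjugate

/-- If `(x̄,σ̄) ∈ ℝⁿ × dom V*` satisfies `A(σ̄)x̄ = b(σ̄)`,
`q(x̄) ∈ ∂V*(σ̄)` and `A(σ̄) ⪰ 0`, then `σ̄ ∈ S_col⁺` and
`f(x̄) = inf_{x ∈ dom f} f(x) = Ξ(x̄,σ̄) = sup_{σ ∈ S_col⁺} D(σ) = D(σ̄)`;
moreover if `A(σ̄) ≻ 0` then `x̄` is the unique global minimizer of `f` on `dom f`. -/
theorem statement3 {n m : ℕ}
    (A0 : Matrix (Fin n) (Fin n) ℝ) (A : Fin m → Matrix (Fin n) (Fin n) ℝ)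
    (b0 : Fin n → ℝ) (b : Fin m → Fin n → ℝ) (c : Fin m → ℝ)
    (hA0 : A0.IsSymm) (hA : ∀ i, (A i).IsSymm)
    (V Vs : (Fin m → ℝ) → ℝ) (dV dVs : Set (Fin m → ℝ))
    (hV : properLscConvex V dV) (hconj : isConjugate V dV Vs dVs)
    (D : (Fin m → ℝ) → ℝ)
    (hD : ∀ σ ∈ dVs, bvec b0 b σ ∈ Set.range (Amat A0 A σ).mulVec →
      ∀ x, Amat A0 A σ *ᵥ x = bvec b0 b σ →
        D σ = qf A0 b0 0 x + qvec A b c x ⬝ᵥ σ - Vs σ)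
    (xb : Fin n → ℝ) (σb : Fin m → ℝ) (hσdom : σb ∈ dVs)
    (hcrit : Amat A0 A σb *ᵥ xb = bvec b0 b σb)
    (hsub : qvec A b c xb ∈ subdiff Vs dVs σb)
    (hpsd : (Amat A0 A σb).PosSemidef) :
    bvec b0 b σb ∈ Set.range (Amat A0 A σb).mulVec ∧
    qvec A b c xb ∈ dV ∧
    (∀ x, qvec A b c x ∈ dV →
      qf A0 b0 0 xb + V (qvec A b c xb) ≤ qf A0 b0 0 x + V (qvec A b c x)) ∧
    qf A0 b0 0 xb + V (qvec A b c xb) =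
      qf A0 b0 0 xb + qvec A b c xb ⬝ᵥ σb - Vs σb ∧
    qf A0 b0 0 xb + qvec A b c xb ⬝ᵥ σb - Vs σb = D σb ∧
    (∀ σ, σ ∈ dVs → bvec b0 b σ ∈ Set.range (Amat A0 A σ).mulVec →
      (Amat A0 A σ).PosSemidef → D σ ≤ D σb) ∧
    ((Amat A0 A σb).PosDef →
      ∀ x, qvec A b c x ∈ dV → x ≠ xb →
        qf A0 b0 0 xb + V (qvec A b c xb) < qf A0 b0 0 x + V (qvec A b c x)) := by
  set y := qvec A b c xb
  have hmax : ∀ σ ∈ dVs, y ⬝ᵥ σ - Vs σ ≤ y ⬝ᵥ σb - Vs σb := fun σ hσ => by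
    have := hsub.2 σ hσ
    rw [sub_dotProduct, dotProduct_comm σ, dotProduct_comm σb] at this
    linarith
  obtain ⟨hy, hVle⟩ := hconj.mem_and_le_of_forall_dotProduct_sub_le hV hσdom hmax
  have hVeq : V y = y ⬝ᵥ σb - Vs σb :=
    le_antisymm hVle (by linarith [hconj.dotProduct_sub_le hσdom hy])
  have hgap {σ : Fin m → ℝ} {x₀ : Fin n → ℝ} (h : Amat A0 A σ *ᵥ x₀ = bvec b0 b σ) :=
    qf_add_qvec_dotProduct_sub_of_mulVec_eq hA0 hA b0 b c h
  refine ⟨⟨xb, hcrit⟩, hy, fun x hx => ?_, by rw [hVeq]; ring,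
    (hD σb hσdom ⟨xb, hcrit⟩ xb hcrit).symm, fun σ hσ ⟨x₀, hx₀⟩ hpsdσ => ?_,
    fun hpd x hx hne => ?_⟩
  · have := hpsd.dotProduct_mulVec_nonneg (x - xb)
    simp only [star_trivial] at this
    linarith [hgap hcrit x, hconj.dotProduct_sub_le hσdom hx]
  · rw [hD σ hσ ⟨x₀, hx₀⟩ x₀ hx₀, hD σb hσdom ⟨xb, hcrit⟩ xb hcrit]
    have := hpsdσ.dotProduct_mulVec_nonneg (xb - x₀)
    simp only [star_trivial] at this
    linarith [hgap hx₀ xb, hconj.dotProduct_sub_le hσ hy]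
  · have := hpd.dotProduct_mulVec_pos (sub_ne_zero.2 hne)
    simp only [star_trivial] at this
    linarith [hgap hcrit x, hconj.dotProduct_sub_le hσdom hx]
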